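/- Let P be a locally finite ranked poset with a special matching M, and let u, v ∈ P with u ≤ v. If M(v) ⋖ v and M(u) ⋗ u, then M(u) ≤ v and u ≤ M(v). -/
import Mathlib

/-- A rank function is strictly monotone (auxiliary, with a card bound for induction). -/
lemma rankLT_aux_aux {P : Type*} [PartialOrder P] [LocallyFiniteOrder P]
    (ρ : P → ℕ) (hρ : ∀ x y : P, x ⋖ y → ρ y = ρ x + 1) :
    ∀ n : ℕ, ∀ u v : P, (Finset.Icc u v).card ≤ n → u < v → ρ u < ρ v := by
  intro n
  induction n with
  | zero =>
    intro u v hc huv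
    have hu : u ∈ Finset.Icc u v := Finset.mem_Icc.mpr ⟨le_rfl, huv.le⟩
    have := Finset.card_pos.mpr ⟨u, hu⟩
    omega
  | succ n ih =>
    intro u v hc huv
    obtain ⟨w, huw, hwv⟩ := exists_covBy_le_of_lt huv
    rcases eq_or_lt_of_le hwv with rfl | hwv'
    · have := hρ u w huw; omega
    · have hsub : Finset.Icc w v ⊆ Finset.Icc u v :=
        Finset.Icc_subset_Icc huw.le le_rfl
      have hu : u ∈ Finset.Icc u v := Finset.mem_Icc.mpr ⟨le_rfl, huv.le⟩
      have hnot : u ∉ Finset.Icc w v := by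
        intro h
        exact absurd ((Finset.mem_Icc.mp h).1) (not_le_of_gt huw.lt)
      have hcard : (Finset.Icc w v).card < (Finset.Icc u v).card :=
        Finset.card_lt_card ⟨hsub, fun h => hnot (h hu)⟩
      have h1 := ih w v (by omega) hwv'
      have := hρ u w huw
      omega

lemma rankLT_aux {P : Type*} [PartialOrder P] [LocallyFiniteOrder P]
    (ρ : P → ℕ) (hρ : ∀ x y : P, x ⋖ y → ρ y = ρ x + 1)
    {u v : P} (huv : u < v) : ρ u < ρ v :=
  rankLT_aux_aux ρ hρ (Finset.Icc u v).card u v le_rfl huv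

lemma rankLE_aux {P : Type*} [PartialOrder P] [LocallyFiniteOrder P]
    (ρ : P → ℕ) (hρ : ∀ x y : P, x ⋖ y → ρ y = ρ x + 1)
    {u v : P} (huv : u ≤ v) : ρ u ≤ ρ v := by
  rcases eq_or_lt_of_le huv with rfl | h
  · exact le_rfl
  · exact (rankLT_aux ρ hρ h).le

/-- The main induction for the lifting property. -/
lemma lifting_aux {P : Type*} [PartialOrder P] [LocallyFiniteOrder P]
    (ρ : P → ℕ) (hρ : ∀ x y : P, x ⋖ y → ρ y = ρ x + 1)
    (M : P → P) (hinv : Function.Involutive M)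
    (hmatch : ∀ v : P, M v ⋖ v ∨ v ⋖ M v)
    (hspecial : ∀ u v : P, u ⋖ v → M u ≠ v → M u ≤ M v) :
    ∀ n : ℕ, ∀ u v : P, ρ v - ρ u ≤ n → u ≤ v → M v ⋖ v → u ⋖ M u →
      M u ≤ v ∧ u ≤ M v := by
  intro n
  induction n with
  | zero =>
    intro u v hn huv hMv hMu
    rcases eq_or_lt_of_le huv with rfl | hlt
    · exact absurd (hMv.lt.trans hMu.lt) (lt_irrefl _)
    · have := rankLT_aux ρ hρ hlt; omega
  | succ n ih =>
    intro u v hn huv hMv hMu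
    rcases eq_or_lt_of_le huv with rfl | hlt
    · exact absurd (hMv.lt.trans hMu.lt) (lt_irrefl _)
    obtain ⟨w, huw, hwv⟩ := exists_le_covBy_of_lt hlt
    have hρwv := hρ w v hwv
    rcases hmatch w with hMw | hMw
    · -- M w ⋖ w : use the induction hypothesis on (u, w)
      have hρu : ρ u ≤ ρ w := rankLE_aux ρ hρ huw
      obtain ⟨h1, h2⟩ := ih u w (by omega) huw hMw hMu
      refine ⟨h1.trans hwv.le, h2.trans ?_⟩
      have hne : M w ≠ v := ne_of_lt (hMw.lt.trans hwv.lt)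
      exact hspecial w v hwv hne
    · -- w ⋖ M w : then necessarily M w = v
      have hMwv : M w = v := by
        by_contra hne
        have hle := hspecial w v hwv hne
        have h1 := hρ w (M w) hMw
        have h2 := hρ (M v) v hMv
        have h3 := rankLE_aux ρ hρ hle
        omega
      have hMvw : M v = w := by rw [← hMwv, hinv]
      refine ⟨?_, hMvw ▸ huw⟩
      rcases eq_or_lt_of_le huw with rfl | huw'
      · rw [hMwv]
      obtain ⟨z, huz, hzw⟩ := exists_covBy_le_of_lt huw'
      by_cases hMuz : M u = z
      · exact hMuz ▸ (hzw.trans hwv.le)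
      have hle := hspecial u z huz hMuz
      rcases hmatch z with hMz | hMz
      · exact hle.trans (hMz.le.trans (hzw.trans hwv.le))
      · have hρz := hρ u z huz
        have hρuw : ρ u < ρ w := rankLT_aux ρ hρ huw'
        have := ih z v (by omega) (hzw.trans hwv.le) hMv hMz
        exact hle.trans this.1

/-- Lifting property for special matchings of a locally finite ranked poset.
`P` is a locally finite graded poset with minimum and rank function `ρ`;
`M` is a matching of the Hasse diagram of `P` (an involution matching each
element with one covering it or covered by it), and `M` is special:
`u ⋖ v` and `M u ≠ v` imply `M u ≤ M v`. -/
theorem lifting_property {P : Type*} [PartialOrder P] [LocallyFiniteOrder P] [OrderBot P]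
    (ρ : P → ℕ) (hρ_bot : ρ ⊥ = 0) (hρ : ∀ x y : P, x ⋖ y → ρ y = ρ x + 1)
    (M : P → P) (hinv : Function.Involutive M)
    (hmatch : ∀ v : P, M v ⋖ v ∨ v ⋖ M v)
    (hspecial : ∀ u v : P, u ⋖ v → M u ≠ v → M u ≤ M v)
    (u v : P) (huv : u ≤ v)
    (hMv : M v ⋖ v) (hMu : u ⋖ M u) : M u ≤ v ∧ u ≤ M v :=
  lifting_aux ρ hρ M hinv hmatch hspecial (ρ v - ρ u) u v le_rfl huv hMv hMu
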